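/- There exist μ ≥ −k₀⁴, ζ ∈ (0,1), and a continuous positive function y : [0,1] → ℝ which is C¹ on [0,ζ] and on [ζ,1] (with possibly different one-sided derivatives at ζ), twice differentiable with −y'' = μ y on (0,ζ) ∪ (ζ,1), and satisfying y'(0) − k₀² y(0) = 0, 2 y'(ζ−0) − y(ζ) = 0, 2 y'(ζ+0) + y(ζ) = 0, y'(1) + k₁² y(1) = 0, if and only if k₀² > 1/2 or k₀² = k₁² = 1/2. -/

import Mathlib

open MeasureTheory Set Real Filter

open Topology

/-- Existence of a continuous positive solution of `-y'' = μ y` on `(0,ζ) ∪ (ζ,1)` that is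
`C¹` on `[0,ζ]` and on `[ζ,1]` (with possibly different one-sided derivatives `dL ζ`, `dR ζ`
at `ζ`), satisfying `y'(0) - k₀² y(0) = 0`, `2 y'(ζ-0) - y(ζ) = 0`, `2 y'(ζ+0) + y(ζ) = 0`
and `y'(1) + k₁² y(1) = 0`. -/
def BrokenSol (k0 k1 μ ζ : ℝ) : Prop :=
  ∃ y dL dR : ℝ → ℝ,
    ContinuousOn y (Icc (0:ℝ) 1) ∧
    (∀ x ∈ Icc (0:ℝ) 1, 0 < y x) ∧
    (∀ x ∈ Icc (0:ℝ) ζ, HasDerivWithinAt y (dL x) (Icc (0:ℝ) ζ) x) ∧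
    (∀ x ∈ Icc ζ (1:ℝ), HasDerivWithinAt y (dR x) (Icc ζ (1:ℝ)) x) ∧
    ContinuousOn dL (Icc (0:ℝ) ζ) ∧
    ContinuousOn dR (Icc ζ (1:ℝ)) ∧
    (∀ x ∈ Ioo (0:ℝ) ζ, HasDerivWithinAt dL (-(μ * y x)) (Icc (0:ℝ) ζ) x) ∧
    (∀ x ∈ Ioo ζ (1:ℝ), HasDerivWithinAt dR (-(μ * y x)) (Icc ζ (1:ℝ)) x) ∧
    dL 0 - k0 ^ 2 * y 0 = 0 ∧
    2 * dL ζ - y ζ = 0 ∧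
    2 * dR ζ + y ζ = 0 ∧
    dR 1 + k1 ^ 2 * y 1 = 0

/-!
Necessity. For a solution of `-y'' = μ y`, the Wronskian `(y' - κ y) e^{κ x}` of `e^{κ x}` and `y`
has derivative `-(μ + κ²) y e^{κ x}`. With `κ = k₀²` on `[0, ζ]` it vanishes at `0` and equals
`(1/2 - k₀²) y(ζ) e^{k₀² ζ}` at `ζ`; as `μ + k₀⁴ ≥ 0` this forces `k₀² ≥ 1/2`, and `k₀² = 1/2` only
if `μ = -1/4`. Then with `κ = -1/2` on `[ζ, 1]` the Wronskian is constant, which forces `k₁² = 1/2`.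

Sufficiency. Take `φ (ω x + A)` on `[0, ζ]` and `φ (ω (1 - x) + D)` on `[ζ, 1]`, where `φ` is `sin`,
`t ↦ t` or `sinh` according as `1/k₀² + 1/k₁²` is below, equal to or above `3` (and `φ = exp` when
`k₀² = k₁² = 1/2`). The boundary conditions make the phases `A`, `B` (at `ζ`) and `D` the `arctan`
(resp. `artanh`) of `ω/k₀²`, `2ω` and `ω/k₁²`, and matching at `ζ` requires `ω = 2B - A - D`. This
equation has a root by the intermediate value theorem: near `ω = 0` the sign of `2B - A - D - ω`
is that of `3 - 1/k₀² - 1/k₁²`.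
-/

theorem exists_wronskian_exp_sub_eq {y d : ℝ → ℝ} {a b μ κ : ℝ} (hab : a < b)
    (hy : ∀ x ∈ Icc a b, HasDerivWithinAt y (d x) (Icc a b) x) (hdc : ContinuousOn d (Icc a b))
    (hd : ∀ x ∈ Ioo a b, HasDerivWithinAt d (-(μ * y x)) (Icc a b) x) :
    ∃ c ∈ Ioo a b, (d b - κ * y b) * exp (κ * b) - (d a - κ * y a) * exp (κ * a)
      = -((μ + κ ^ 2) * y c * exp (κ * c) * (b - a)) := by
  have hyc : ContinuousOn y (Icc a b) := fun x hx => (hy x hx).continuousWithinAt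
  have hderiv : ∀ x ∈ Ioo a b, HasDerivAt (fun t => (d t - κ * y t) * exp (κ * t))
      (-((μ + κ ^ 2) * y x * exp (κ * x))) x := by
    intro x hx
    have hnhds : Icc a b ∈ 𝓝 x := Icc_mem_nhds hx.1 hx.2
    have hy' := (hy x (Ioo_subset_Icc_self hx)).hasDerivAt hnhds
    have hd' := (hd x hx).hasDerivAt hnhds
    have hexp : HasDerivAt (fun t => exp (κ * t)) (exp (κ * x) * κ) x := by
      simpa using ((hasDerivAt_id x).const_mul κ).exp
    exact ((hd'.sub (hy'.const_mul κ)).mul hexp).congr_deriv (by simp only [Pi.sub_apply]; ring)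
  obtain ⟨c, hc, hslope⟩ :=
    exists_hasDerivAt_eq_slope (fun t => (d t - κ * y t) * exp (κ * t)) _ hab ((hdc.sub
      (hyc.const_smul κ)).mul (continuous_exp.comp_continuousOn
        (continuousOn_const.mul continuousOn_id))) hderiv
  refine ⟨c, hc, ?_⟩
  rw [eq_div_iff (sub_ne_zero.2 hab.ne')] at hslope
  simpa only [neg_mul] using hslope.symm

theorem BrokenSol.half_lt_or_eq {k0 k1 μ ζ : ℝ} (h : BrokenSol k0 k1 μ ζ) (hζ0 : 0 < ζ)
    (hζ1 : ζ ≤ 1) (hμ : -k0 ^ 4 ≤ μ) : 1 / 2 < k0 ^ 2 ∨ (k0 ^ 2 = 1 / 2 ∧ μ = -1 / 4) := by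
  obtain ⟨y, dL, -, -, hpos, hyL, -, hdLc, -, hdL, -, h0, hζ, -, -⟩ := h
  obtain ⟨c, hc, hW⟩ := exists_wronskian_exp_sub_eq (κ := k0 ^ 2) hζ0 hyL hdLc hdL
  have hP : 0 < y c * exp (k0 ^ 2 * c) * ζ :=
    mul_pos (mul_pos (hpos c ⟨hc.1.le, hc.2.le.trans hζ1⟩) (exp_pos _)) hζ0
  have hQ : 0 < y ζ * exp (k0 ^ 2 * ζ) := mul_pos (hpos ζ ⟨hζ0.le, hζ1⟩) (exp_pos _)
  have key : (1 / 2 - k0 ^ 2) * (y ζ * exp (k0 ^ 2 * ζ))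
      = -((μ + k0 ^ 4) * (y c * exp (k0 ^ 2 * c) * ζ)) := by
    rw [h0, zero_mul, sub_zero, sub_zero] at hW
    linear_combination hW - exp (k0 ^ 2 * ζ) / 2 * hζ
  rcases lt_trichotomy (k0 ^ 2) (1 / 2) with hlt | heq | hgt
  · nlinarith [mul_pos (sub_pos.2 hlt) hQ, mul_nonneg (by linarith : 0 ≤ μ + k0 ^ 4) hP.le]
  · have hμ' : μ + k0 ^ 4 = 0 := by
      refine (mul_eq_zero.1 ?_).resolve_right hP.ne'
      linear_combination key + y ζ * exp (k0 ^ 2 * ζ) * heq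
    exact Or.inr ⟨heq, by nlinarith⟩
  · exact Or.inl hgt

theorem BrokenSol.sq_right_eq_half {k0 k1 ζ : ℝ} (h : BrokenSol k0 k1 (-1 / 4) ζ) (hζ0 : 0 ≤ ζ)
    (hζ1 : ζ < 1) : k1 ^ 2 = 1 / 2 := by
  obtain ⟨y, -, dR, -, hpos, -, hyR, -, hdRc, -, hdR, -, -, hζ, h1⟩ := h
  obtain ⟨c, -, hW⟩ := exists_wronskian_exp_sub_eq (κ := -1 / 2) hζ1 hyR hdRc hdR
  have hζ' : dR ζ - -1 / 2 * y ζ = 0 := by linarith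
  rw [hζ', zero_mul, sub_zero, show (-1 / 4 : ℝ) + (-1 / 2) ^ 2 = 0 by norm_num, zero_mul,
    zero_mul, zero_mul, neg_zero] at hW
  have h1' : (k1 ^ 2 - 1 / 2) * y 1 = 0 := by
    linarith [(mul_eq_zero.1 hW).resolve_right (exp_ne_zero _)]
  linarith [(mul_eq_zero.1 h1').resolve_right (hpos 1 ⟨hζ0.trans hζ1.le, le_rfl⟩).ne']

theorem brokenSol_of_pieces {k0 k1 μ ζ : ℝ} {yL dL yR dR : ℝ → ℝ} (hζ0 : 0 ≤ ζ) (hζ1 : ζ ≤ 1)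
    (hyL : ∀ x, HasDerivAt yL (dL x) x) (hdL : ∀ x, HasDerivAt dL (-(μ * yL x)) x)
    (hyR : ∀ x, HasDerivAt yR (dR x) x) (hdR : ∀ x, HasDerivAt dR (-(μ * yR x)) x)
    (hposL : ∀ x ∈ Icc 0 ζ, 0 < yL x) (hposR : ∀ x ∈ Icc ζ 1, 0 < yR x) (hζ : yL ζ = yR ζ)
    (h0 : dL 0 - k0 ^ 2 * yL 0 = 0) (hζL : 2 * dL ζ - yL ζ = 0) (hζR : 2 * dR ζ + yR ζ = 0)
    (h1 : dR 1 + k1 ^ 2 * yR 1 = 0) : BrokenSol k0 k1 μ ζ := by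
  set y : ℝ → ℝ := fun x => if x ≤ ζ then yL x else yR x
  have hL : EqOn y yL (Icc 0 ζ) := fun x hx => if_pos hx.2
  have hR : EqOn y yR (Icc ζ 1) := fun x hx => by
    rcases hx.1.eq_or_lt with rfl | hlt
    · exact (if_pos le_rfl).trans hζ
    · exact if_neg hlt.not_ge
  have hy : Continuous y :=
    Continuous.if_le (continuous_iff_continuousAt.2 fun x => (hyL x).continuousAt)
      (continuous_iff_continuousAt.2 fun x => (hyR x).continuousAt) continuous_id
      continuous_const fun x hx => hx ▸ hζ
  refine ⟨y, dL, dR, hy.continuousOn, fun x hx => ?_,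
    fun x hx => (hyL x).hasDerivWithinAt.congr hL (hL hx),
    fun x hx => (hyR x).hasDerivWithinAt.congr hR (hR hx),
    fun x _ => (hdL x).continuousAt.continuousWithinAt,
    fun x _ => (hdR x).continuousAt.continuousWithinAt,
    fun x hx => ?_, fun x hx => ?_, ?_, ?_, ?_, ?_⟩
  · rcases le_or_gt x ζ with hxζ | hxζ
    · exact (hL ⟨hx.1, hxζ⟩).symm ▸ hposL x ⟨hx.1, hxζ⟩
    · exact (hR ⟨hxζ.le, hx.2⟩).symm ▸ hposR x ⟨hxζ.le, hx.2⟩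
  · rw [hL (Ioo_subset_Icc_self hx)]
    exact (hdL x).hasDerivWithinAt
  · rw [hR (Ioo_subset_Icc_self hx)]
    exact (hdR x).hasDerivWithinAt
  · rwa [hL (left_mem_Icc.2 hζ0)]
  · rwa [hL (right_mem_Icc.2 hζ0)]
  · rwa [hR (left_mem_Icc.2 hζ1)]
  · rwa [hR (right_mem_Icc.2 hζ1)]

theorem exists_brokenSol_of_profile {φ ψ : ℝ → ℝ} {σ ω k0 k1 A B D : ℝ}
    (hφ : ∀ t, HasDerivAt φ (ψ t) t) (hψ : ∀ t, HasDerivAt ψ (-(σ * φ t)) t)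
    (hAB : A < B) (hDB : D < B) (hω : ω = 2 * B - A - D) (hpos : ∀ t ∈ Icc (min A D) B, 0 < φ t)
    (hA : ω * ψ A = k0 ^ 2 * φ A) (hB : 2 * ω * ψ B = φ B) (hD : ω * ψ D = k1 ^ 2 * φ D) :
    ∃ ζ ∈ Ioo (0:ℝ) 1, BrokenSol k0 k1 (σ * ω ^ 2) ζ := by
  have hω0 : 0 < ω := by linarith
  set ζ := (B - A) / ω with hζ_def
  have hζL : ω * ζ + A = B := by rw [hζ_def, mul_div_cancel₀ _ hω0.ne']; ring
  have hζR : ω * (1 - ζ) + D = B := by linear_combination hω - hζL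
  have hζ0 : 0 < ζ := div_pos (by linarith) hω0
  have hζ1 : ζ < 1 := (div_lt_one hω0).2 (by linarith)
  have hlinL : ∀ x, HasDerivAt (fun x => ω * x + A) ω x := fun x => by
    simpa using ((hasDerivAt_id x).const_mul ω).add_const A
  have hlinR : ∀ x, HasDerivAt (fun x => ω * (1 - x) + D) (-ω) x := fun x => by
    simpa using (((hasDerivAt_id x).const_sub 1).const_mul ω).add_const D
  refine ⟨ζ, ⟨hζ0, hζ1⟩, brokenSol_of_pieces (yL := fun x => φ (ω * x + A))
    (dL := fun x => ω * ψ (ω * x + A)) (yR := fun x => φ (ω * (1 - x) + D))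
    (dR := fun x => -(ω * ψ (ω * (1 - x) + D))) hζ0.le hζ1.le
    (fun x => ((hφ _).comp x (hlinL x)).congr_deriv (mul_comm _ _))
    (fun x => (((hψ _).comp x (hlinL x)).const_mul ω).congr_deriv (by ring))
    (fun x => ((hφ _).comp x (hlinR x)).congr_deriv (by ring))
    (fun x => (((hψ _).comp x (hlinR x)).const_mul ω).neg.congr_deriv (by ring))
    (fun x hx => hpos _ ⟨?_, ?_⟩) (fun x hx => hpos _ ⟨?_, ?_⟩) ?_ ?_ ?_ ?_ ?_⟩
  · nlinarith [min_le_left A D, hx.1]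
  · nlinarith [hx.2]
  · nlinarith [min_le_right A D, hx.2]
  · nlinarith [hx.1]
  · simp only [hζL, hζR]
  · simp only [mul_zero, zero_add]; linarith
  · simp only [hζL]; linarith
  · simp only [hζR]; linarith
  · simp only [sub_self, mul_zero, zero_add]; linarith

theorem exists_mem_Ioo_lt_of_hasDerivAt_neg {f : ℝ → ℝ} {a b f' : ℝ} (hab : a < b)
    (hf : HasDerivAt f f' a) (hf' : f' < 0) : ∃ x ∈ Ioo a b, f x < f a := by
  have hslope : ∀ᶠ x in 𝓝[>] a, slope f a x < 0 :=
    (hf.tendsto_slope.mono_left (nhdsGT_le_nhdsNE a)).eventually (gt_mem_nhds hf')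
  obtain ⟨x, hneg, hx⟩ := (hslope.and (Ioo_mem_nhdsGT hab)).exists
  rw [slope_def_field, div_neg_iff] at hneg
  exact ⟨x, hx, by rcases hneg with h | h <;> linarith [h.1, h.2, hx.1]⟩

theorem exists_mem_Ioo_eq_of_hasDerivAt_neg {f : ℝ → ℝ} {a b f' : ℝ} (hab : a < b)
    (hfc : ContinuousOn f (Icc a b)) (hf : HasDerivAt f f' a) (hf' : f' < 0) (hb : f a < f b) :
    ∃ x ∈ Ioo a b, f x = f a := by
  obtain ⟨x₀, hx₀, hlt⟩ := exists_mem_Ioo_lt_of_hasDerivAt_neg hab hf hf'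
  obtain ⟨x, hx, hfx⟩ := intermediate_value_Ioo hx₀.2.le
    (hfc.mono (Icc_subset_Icc hx₀.1.le le_rfl)) ⟨hlt, hb⟩
  exact ⟨x, ⟨hx₀.1.trans hx.1, hx.2⟩, hfx⟩

theorem sin_arctan_eq_mul_cos (x : ℝ) : sin (arctan x) = x * cos (arctan x) := by
  refine ((eq_div_iff (cos_arctan_pos x).ne').1 ?_).symm
  rw [← tan_eq_sin_div_cos, tan_arctan]

theorem exists_eq_two_mul_arctan_sub {p q : ℝ} (hp : 0 < p) (hq : 0 < q) (hpq : 1 / p + 1 / q < 3) :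
    ∃ m ∈ Ioo 0 π, m = 2 * arctan (2 * m) - arctan (m / p) - arctan (m / q) := by
  set f : ℝ → ℝ := fun m => m + arctan (m / p) + arctan (m / q) - 2 * arctan (2 * m)
  have hf : HasDerivAt f (1 / p + 1 / q - 3) 0 := by
    refine (((hasDerivAt_id 0).add ((hasDerivAt_id 0).div_const p).arctan).add
      ((hasDerivAt_id 0).div_const q).arctan).sub
        (((hasDerivAt_id 0).const_mul 2).arctan.const_mul 2) |>.congr_deriv ?_
    norm_num
    ring
  have hπ : f 0 < f π := by
    simp only [f, zero_div, mul_zero, arctan_zero]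
    linarith [arctan_lt_pi_div_two (2 * π), arctan_pos.2 (div_pos pi_pos hp),
      arctan_pos.2 (div_pos pi_pos hq)]
  obtain ⟨m, hm, hfm⟩ := exists_mem_Ioo_eq_of_hasDerivAt_neg pi_pos
    (by fun_prop) hf (by linarith) hπ
  simp only [f, zero_div, mul_zero, arctan_zero] at hfm
  exact ⟨m, hm, by linarith⟩

theorem Real.hasDerivAt_artanh {x : ℝ} (hx : x ∈ Ioo (-1) 1) :
    HasDerivAt artanh (1 - x ^ 2)⁻¹ x := by
  have h1 : 0 < 1 + x := by linarith [hx.1]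
  have h2 : 0 < 1 - x := by linarith [hx.2]
  have hformula : artanh =ᶠ[𝓝 x] fun t => 1 / 2 * log ((1 + t) / (1 - t)) :=
    Filter.eventuallyEq_of_mem (Icc_mem_nhds hx.1 hx.2) fun t ht => artanh_eq_half_log ht
  refine HasDerivAt.congr_of_eventuallyEq ?_ hformula
  refine (((((hasDerivAt_id x).const_add 1).div ((hasDerivAt_id x).const_sub 1) h2.ne').log
    (div_pos h1 h2).ne').const_mul (1 / 2)).congr_deriv ?_
  have h3 : 1 - x ^ 2 ≠ 0 := (by nlinarith : 0 < 1 - x ^ 2).ne'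
  simp only [Pi.div_apply, id]
  field_simp
  ring

theorem Real.continuousOn_artanh : ContinuousOn artanh (Ioo (-1) 1) :=
  fun _ hx => (hasDerivAt_artanh hx).continuousAt.continuousWithinAt

theorem sinh_artanh_eq_mul_cosh {x : ℝ} (hx : x ∈ Ioo (-1) 1) :
    sinh (artanh x) = x * cosh (artanh x) := by
  refine ((eq_div_iff (cosh_pos _).ne').1 ?_).symm
  rw [← tanh_eq_sinh_div_cosh, tanh_artanh hx]

theorem exists_eq_two_mul_artanh_sub {p q : ℝ} (hp : 1 / 2 < p) (hq : 1 / 2 < q)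
    (hpq : 3 < 1 / p + 1 / q) :
    ∃ c ∈ Ioo 0 (1 / 2), c = 2 * artanh (2 * c) - artanh (c / p) - artanh (c / q) := by
  set G : ℝ → ℝ := fun c => 2 * artanh (2 * c) - artanh (c / p) - artanh (c / q) - c
  have hd0 : HasDerivAt artanh 1 0 := by simpa using hasDerivAt_artanh (x := 0) (by norm_num)
  have hG : HasDerivAt G (3 - (1 / p + 1 / q)) 0 := by
    refine ((((hd0.comp_of_eq 0 ((hasDerivAt_id 0).const_mul 2) (by simp)).const_mul 2).sub
      (hd0.comp_of_eq 0 ((hasDerivAt_id 0).div_const p) (by simp))).sub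
        (hd0.comp_of_eq 0 ((hasDerivAt_id 0).div_const q) (by simp))).sub (hasDerivAt_id 0)
      |>.congr_deriv ?_
    ring
  obtain ⟨T, hT0, hT⟩ : ∃ T, 0 < T ∧ artanh (1 / (2 * p)) + artanh (1 / (2 * q)) + 1 < 2 * T :=
    ⟨(artanh (1 / (2 * p)) + artanh (1 / (2 * q))) / 2 + 1, by
      linarith [artanh_nonneg (by positivity : (0:ℝ) ≤ 1 / (2 * p)),
        artanh_nonneg (by positivity : (0:ℝ) ≤ 1 / (2 * q))], by linarith⟩
  obtain ⟨b, hb⟩ : ∃ b, b = tanh T / 2 := ⟨_, rfl⟩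
  have hb0 : 0 < b := by
    rw [hb, tanh_eq_sinh_div_cosh]; exact half_pos (div_pos (sinh_pos_iff.2 hT0) (cosh_pos T))
  have hb1 : b < 1 / 2 := by linarith [tanh_lt_one T]
  have hmaps : ∀ r, 1 / 2 < r → ∀ c ∈ Icc 0 b, c / r ∈ Ioo (-1) 1 := fun r hr c hc =>
    ⟨by linarith [div_nonneg hc.1 (by linarith : (0:ℝ) ≤ r)],
      (div_lt_one (by linarith)).2 (by linarith [hc.2])⟩
  have hbound : ∀ r, 1 / 2 < r → artanh (b / r) ≤ artanh (1 / (2 * r)) := fun r hr =>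
    artanh_le_artanh (hmaps r hr b ⟨hb0.le, le_rfl⟩).1 (by rw [div_lt_one (by linarith)]; linarith)
      (by rw [div_le_div_iff₀ (by linarith) (by linarith)]; nlinarith)
  have hGb : G 0 < G b := by
    have h2b : artanh (2 * b) = T := by rw [hb, mul_div_cancel₀ _ two_ne_zero, artanh_tanh]
    simp only [G, mul_zero, zero_div, artanh_zero, h2b]
    linarith [hbound p hp, hbound q hq]
  have hGc : ContinuousOn G (Icc 0 b) := by
    have hcomp : ∀ g : ℝ → ℝ, Continuous g → MapsTo g (Icc 0 b) (Ioo (-1) 1) →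
        ContinuousOn (fun c => artanh (g c)) (Icc 0 b) := fun g hg hmaps =>
      continuousOn_artanh.comp hg.continuousOn hmaps
    refine (((continuousOn_const.mul (hcomp _ (continuous_const_mul 2) fun c hc => ?_)).sub
      (hcomp _ (continuous_id.div_const p) (hmaps p hp))).sub
        (hcomp _ (continuous_id.div_const q) (hmaps q hq))).sub continuousOn_id
    exact ⟨by linarith [hc.1], by linarith [hc.2]⟩
  obtain ⟨c, hc, hGc⟩ := exists_mem_Ioo_eq_of_hasDerivAt_neg hb0 hGc hG (by linarith) hGb
  simp only [G, mul_zero, zero_div, artanh_zero] at hGc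
  exact ⟨c, ⟨hc.1, hc.2.trans hb1⟩, by linarith⟩

theorem exists_brokenSol_sin {k0 k1 : ℝ} (hk0 : 1 / 2 < k0 ^ 2) (hk1 : 1 / 2 < k1 ^ 2)
    (hS : 1 / k0 ^ 2 + 1 / k1 ^ 2 < 3) :
    ∃ μ : ℝ, -k0 ^ 4 ≤ μ ∧ ∃ ζ ∈ Ioo (0:ℝ) 1, BrokenSol k0 k1 μ ζ := by
  have hk0' : 0 < k0 ^ 2 := by linarith
  have hk1' : 0 < k1 ^ 2 := by linarith
  obtain ⟨m, hm, hroot⟩ := exists_eq_two_mul_arctan_sub hk0' hk1' hS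
  have hA : 0 < arctan (m / k0 ^ 2) := arctan_pos.2 (div_pos hm.1 hk0')
  have hD : 0 < arctan (m / k1 ^ 2) := arctan_pos.2 (div_pos hm.1 hk1')
  refine ⟨_, by nlinarith [sq_nonneg m, sq_nonneg (k0 ^ 2)], exists_brokenSol_of_profile
    (φ := sin) (ψ := cos) (σ := 1) (ω := m) (A := arctan (m / k0 ^ 2)) (B := arctan (2 * m))
    (D := arctan (m / k1 ^ 2)) hasDerivAt_sin (fun t => by simpa using hasDerivAt_cos t)
    (arctan_strictMono ((div_lt_iff₀ hk0').2 (by nlinarith [hm.1])))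
    (arctan_strictMono ((div_lt_iff₀ hk1').2 (by nlinarith [hm.1]))) (by linarith)
    (fun t ht => sin_pos_of_pos_of_lt_pi ((lt_min hA hD).trans_le ht.1)
      (ht.2.trans_lt ((arctan_lt_pi_div_two _).trans (by linarith [pi_pos])))) ?_ ?_ ?_⟩
  · rw [sin_arctan_eq_mul_cos, ← mul_assoc, mul_div_cancel₀ _ hk0'.ne']
  · rw [sin_arctan_eq_mul_cos]
  · rw [sin_arctan_eq_mul_cos, ← mul_assoc, mul_div_cancel₀ _ hk1'.ne']

theorem exists_brokenSol_linear {k0 k1 : ℝ} (hk0 : 1 / 2 < k0 ^ 2) (hk1 : 1 / 2 < k1 ^ 2)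
    (hS : 1 / k0 ^ 2 + 1 / k1 ^ 2 = 3) :
    ∃ μ : ℝ, -k0 ^ 4 ≤ μ ∧ ∃ ζ ∈ Ioo (0:ℝ) 1, BrokenSol k0 k1 μ ζ := by
  have hk0' : 0 < k0 ^ 2 := by linarith
  have hk1' : 0 < k1 ^ 2 := by linarith
  refine ⟨_, by nlinarith [sq_nonneg (k0 ^ 2)], exists_brokenSol_of_profile
    (φ := fun t => t) (ψ := fun _ => 1) (σ := 0) (ω := 1) (A := 1 / k0 ^ 2) (B := 2)
    (D := 1 / k1 ^ 2) hasDerivAt_id' (fun t => by simpa using hasDerivAt_const t (1:ℝ))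
    ((div_lt_iff₀ hk0').2 (by linarith)) ((div_lt_iff₀ hk1').2 (by linarith)) (by linarith)
    (fun t ht => (lt_min (by positivity) (by positivity)).trans_le ht.1)
    (by rw [mul_one_div_cancel hk0'.ne', one_mul]) (by norm_num)
    (by rw [mul_one_div_cancel hk1'.ne', one_mul])⟩

theorem exists_brokenSol_sinh {k0 k1 : ℝ} (hk0 : 1 / 2 < k0 ^ 2) (hk1 : 1 / 2 < k1 ^ 2)
    (hS : 3 < 1 / k0 ^ 2 + 1 / k1 ^ 2) :
    ∃ μ : ℝ, -k0 ^ 4 ≤ μ ∧ ∃ ζ ∈ Ioo (0:ℝ) 1, BrokenSol k0 k1 μ ζ := by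
  have hk0' : 0 < k0 ^ 2 := by linarith
  have hk1' : 0 < k1 ^ 2 := by linarith
  obtain ⟨c, hc, hroot⟩ := exists_eq_two_mul_artanh_sub hk0 hk1 hS
  have hmem : ∀ r, 1 / 2 < r → c / r ∈ Ioo 0 1 := fun r hr =>
    ⟨div_pos hc.1 (by linarith), (div_lt_one (by linarith)).2 (by linarith [hc.2])⟩
  have h2c : 2 * c ∈ Ioo (-1) 1 := ⟨by linarith [hc.1], by linarith [hc.2]⟩
  have hlt : ∀ r, 1 / 2 < r → c / r < 2 * c := fun r hr =>
    (div_lt_iff₀ (by linarith)).2 (by nlinarith [hc.1])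
  have hA := hmem _ hk0
  have hD := hmem _ hk1
  refine ⟨_, by nlinarith [hc.1, hc.2], exists_brokenSol_of_profile
    (φ := sinh) (ψ := cosh) (σ := -1) (ω := c) (A := artanh (c / k0 ^ 2)) (B := artanh (2 * c))
    (D := artanh (c / k1 ^ 2)) hasDerivAt_sinh (fun t => by simpa using hasDerivAt_cosh t)
    (artanh_lt_artanh (by linarith [hA.1]) h2c.2 (hlt _ hk0))
    (artanh_lt_artanh (by linarith [hD.1]) h2c.2 (hlt _ hk1)) (by linarith)
    (fun t ht => sinh_pos_iff.2 ((lt_min (artanh_pos hA) (artanh_pos hD)).trans_le ht.1))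
    ?_ ?_ ?_⟩
  · rw [sinh_artanh_eq_mul_cosh (Ioo_subset_Ioo_left (by norm_num) hA), ← mul_assoc,
      mul_div_cancel₀ _ hk0'.ne']
  · rw [sinh_artanh_eq_mul_cosh h2c]
  · rw [sinh_artanh_eq_mul_cosh (Ioo_subset_Ioo_left (by norm_num) hD), ← mul_assoc,
      mul_div_cancel₀ _ hk1'.ne']

theorem exists_brokenSol_exp {k0 k1 : ℝ} (hk0 : k0 ^ 2 = 1 / 2) (hk1 : k1 ^ 2 = 1 / 2) :
    ∃ μ : ℝ, -k0 ^ 4 ≤ μ ∧ ∃ ζ ∈ Ioo (0:ℝ) 1, BrokenSol k0 k1 μ ζ :=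
  ⟨_, by nlinarith, exists_brokenSol_of_profile (φ := exp) (ψ := exp) (σ := -1) (ω := 1 / 2)
    (A := 0) (B := 1 / 4) (D := 0) hasDerivAt_exp (fun t => by simpa using hasDerivAt_exp t)
    (by norm_num) (by norm_num) (by norm_num) (fun t _ => exp_pos t) (by rw [hk0]) (by ring)
    (by rw [hk1])⟩

theorem exists_brokenSol_of_half_lt {k0 k1 : ℝ} (hk0 : 1 / 2 < k0 ^ 2) (hk1 : 1 / 2 < k1 ^ 2) :
    ∃ μ : ℝ, -k0 ^ 4 ≤ μ ∧ ∃ ζ ∈ Ioo (0:ℝ) 1, BrokenSol k0 k1 μ ζ := by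
  rcases lt_trichotomy (1 / k0 ^ 2 + 1 / k1 ^ 2) 3 with hS | hS | hS
  exacts [exists_brokenSol_sin hk0 hk1 hS, exists_brokenSol_linear hk0 hk1 hS,
    exists_brokenSol_sinh hk0 hk1 hS]

theorem stmt18 (k0 k1 : ℝ) (hk0 : 0 ≤ k0) (hk01 : k0 ≤ k1) :
    (∃ μ : ℝ, -k0 ^ 4 ≤ μ ∧ ∃ ζ ∈ Ioo (0:ℝ) 1, BrokenSol k0 k1 μ ζ)
      ↔ (1 / 2 < k0 ^ 2 ∨ (k0 ^ 2 = 1 / 2 ∧ k1 ^ 2 = 1 / 2)) := by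
  constructor
  · rintro ⟨μ, hμ, ζ, hζ, h⟩
    rcases h.half_lt_or_eq hζ.1 hζ.2.le hμ with hk | ⟨hk, rfl⟩
    · exact Or.inl hk
    · exact Or.inr ⟨hk, h.sq_right_eq_half hζ.1.le hζ.2⟩
  · rintro (hk | ⟨hk, hk'⟩)
    · exact exists_brokenSol_of_half_lt hk (hk.trans_le (pow_le_pow_left₀ hk0 hk01 2))
    · exact exists_brokenSol_exp hk hk'
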